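/- arXiv:1908.05677 — 5 statements merged into one kernel-verified Lean document; each statement's English description precedes it below -/
import Mathlib

section
/- Let Y : (ℕ → ℕ) → ℕ and let c : D → ℝ be the Specker net c(w) = ∑_{i<|w|} 2^{-Y(w(i))} on the directed set D of Y-injective finite lists, and suppose c converges to c∞. Then for every k ∈ ℕ: there exists f : ℕ → ℕ with Y(f) = k if and only if for every w ∈ D with |c(w) − c∞| < 2^{-k} there exists an entry g of w with Y(g) = k. -/
def SpeckerD (Y : (ℕ → ℕ) → ℕ) : Set (List (ℕ → ℕ)) :=
  {w | ∀ i j (hi : i < w.length) (hj : j < w.length),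
    Y (w.get ⟨i, hi⟩) = Y (w.get ⟨j, hj⟩) → i = j}

def SpeckerLE (v w : List (ℕ → ℕ)) : Prop :=
  ∀ i (hi : i < v.length), ∃ j, ∃ hj : j < w.length, v.get ⟨i, hi⟩ = w.get ⟨j, hj⟩

noncomputable def SpeckerNet (Y : (ℕ → ℕ) → ℕ) (w : List (ℕ → ℕ)) : ℝ :=
  ∑ i : Fin w.length, (2 : ℝ) ^ (-(Y (w.get i) : ℤ))

/-!
The sum `c w` only depends on the finite set of `Y`-values of `w`, so every `c v` is at most
`c∞`: extend a list `w₀` that is `ε`-close to the limit by the entries of `v` carrying new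
`Y`-values. If `k = Y f` and `w` misses the value `k`, then `w ++ [f]` is still in `D` and
`c (w ++ [f]) = c w + 2⁻ᵏ ≤ c∞`, so `w` is not `2⁻ᵏ`-close to `c∞`. Conversely, the
list `w₀` provided by convergence for `ε = 2⁻ᵏ` contains an entry of `Y`-value `k`.
-/

section Specker

variable {Y : (ℕ → ℕ) → ℕ}

theorem exists_get_eq_iff_mem_map {w : List (ℕ → ℕ)} {k : ℕ} :
    (∃ i, ∃ hi : i < w.length, Y (w.get ⟨i, hi⟩) = k) ↔ k ∈ w.map Y := by
  simp [List.mem_iff_getElem]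

theorem mem_speckerD_iff_nodup {w : List (ℕ → ℕ)} : w ∈ SpeckerD Y ↔ (w.map Y).Nodup := by
  rw [List.nodup_iff_injective_get]
  constructor
  · rintro h ⟨i, hi⟩ ⟨j, hj⟩ hij
    simp only [List.get_eq_getElem, List.getElem_map] at hij
    simp only [List.length_map] at hi hj
    exact Fin.ext (h i j hi hj hij)
  · intro h i j hi hj hij
    exact congrArg Fin.val <| h (a₁ := ⟨i, by simpa using hi⟩) (a₂ := ⟨j, by simpa using hj⟩)
      (by simpa using hij)

theorem speckerLE_iff_subset {v w : List (ℕ → ℕ)} : SpeckerLE v w ↔ v ⊆ w := by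
  constructor
  · intro h a ha
    obtain ⟨i, hi, rfl⟩ := List.mem_iff_getElem.1 ha
    obtain ⟨j, hj, hij⟩ := h i hi
    exact List.mem_iff_getElem.2 ⟨j, hj, hij.symm⟩
  · intro h i hi
    obtain ⟨j, hj, hij⟩ := List.mem_iff_getElem.1 (h (List.getElem_mem hi))
    exact ⟨j, hj, hij.symm⟩

theorem speckerNet_eq_sum_map (Y : (ℕ → ℕ) → ℕ) (w : List (ℕ → ℕ)) :
    SpeckerNet Y w = (w.map fun g => (2 : ℝ) ^ (-(Y g : ℤ))).sum := by
  rw [SpeckerNet, ← Fin.sum_univ_fun_getElem]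
  rfl

theorem speckerNet_append_singleton (Y : (ℕ → ℕ) → ℕ) (w : List (ℕ → ℕ)) (f : ℕ → ℕ) :
    SpeckerNet Y (w ++ [f]) = SpeckerNet Y w + (2 : ℝ) ^ (-(Y f : ℤ)) := by
  simp [speckerNet_eq_sum_map]

theorem speckerNet_eq_sum_toFinset {w : List (ℕ → ℕ)} (hw : w ∈ SpeckerD Y) :
    SpeckerNet Y w = ∑ n ∈ (w.map Y).toFinset, (2 : ℝ) ^ (-(n : ℤ)) := by
  rw [List.sum_toFinset _ (mem_speckerD_iff_nodup.1 hw), List.map_map, speckerNet_eq_sum_map]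
  rfl

theorem speckerNet_le_of_map_subset {v w : List (ℕ → ℕ)} (hv : v ∈ SpeckerD Y)
    (hw : w ∈ SpeckerD Y) (hvw : v.map Y ⊆ w.map Y) : SpeckerNet Y v ≤ SpeckerNet Y w := by
  rw [speckerNet_eq_sum_toFinset hv, speckerNet_eq_sum_toFinset hw]
  exact Finset.sum_le_sum_of_subset_of_nonneg (fun n hn => by simpa using hvw (by simpa using hn))
    fun _ _ _ => by positivity

theorem append_singleton_mem_speckerD {w : List (ℕ → ℕ)} {f : ℕ → ℕ} (hw : w ∈ SpeckerD Y)
    (hf : Y f ∉ w.map Y) : w ++ [f] ∈ SpeckerD Y := by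
  rw [mem_speckerD_iff_nodup, List.map_append, List.map_singleton, List.nodup_append]
  exact ⟨mem_speckerD_iff_nodup.1 hw, List.nodup_singleton _, by grind⟩

/-- The witness is `w₀` followed by the entries of `v` whose `Y`-values are new. -/
theorem exists_speckerD_speckerLE_map_subset {w₀ v : List (ℕ → ℕ)} (hw₀ : w₀ ∈ SpeckerD Y)
    (hv : v ∈ SpeckerD Y) : ∃ u ∈ SpeckerD Y, SpeckerLE w₀ u ∧ v.map Y ⊆ u.map Y := by
  refine ⟨w₀ ++ v.filter (fun g => Y g ∉ w₀.map Y), ?_,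
    speckerLE_iff_subset.2 (List.subset_append_left _ _), ?_⟩
  · rw [mem_speckerD_iff_nodup, List.map_append, List.nodup_append]
    refine ⟨mem_speckerD_iff_nodup.1 hw₀,
      (List.filter_sublist.map Y).nodup (mem_speckerD_iff_nodup.1 hv), ?_⟩
    simp only [List.mem_map, List.mem_filter]
    grind
  · intro n hn
    rw [List.map_append, List.mem_append]
    by_cases h : n ∈ w₀.map Y
    · exact Or.inl h
    · obtain ⟨g, hg, rfl⟩ := List.mem_map.1 hn
      exact Or.inr (List.mem_map_of_mem (List.mem_filter.2 ⟨hg, decide_eq_true h⟩))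

theorem speckerNet_le_of_converges {cInf : ℝ}
    (hconv : ∀ ε > (0 : ℝ), ∃ w₀ ∈ SpeckerD Y, ∀ w ∈ SpeckerD Y,
      SpeckerLE w₀ w → |SpeckerNet Y w - cInf| < ε)
    {v : List (ℕ → ℕ)} (hv : v ∈ SpeckerD Y) : SpeckerNet Y v ≤ cInf := by
  refine le_of_forall_pos_le_add fun ε hε => ?_
  obtain ⟨w₀, hw₀, hclose⟩ := hconv ε hε
  obtain ⟨u, hu, hw₀u, hvuY⟩ := exists_speckerD_speckerLE_map_subset hw₀ hv
  have hvu := speckerNet_le_of_map_subset hv hu hvuY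
  linarith [(abs_lt.1 (hclose u hu hw₀u)).2]

end Specker

theorem specker_net_range_characterization_general (Y : (ℕ → ℕ) → ℕ) (cInf : ℝ)
    (hconv : ∀ ε > (0 : ℝ), ∃ w₀ ∈ SpeckerD Y, ∀ w ∈ SpeckerD Y,
      SpeckerLE w₀ w → |SpeckerNet Y w - cInf| < ε) :
    ∀ k : ℕ, (∃ f : ℕ → ℕ, Y f = k) ↔
      (∀ w ∈ SpeckerD Y, |SpeckerNet Y w - cInf| < (2 : ℝ) ^ (-(k : ℤ)) →
        ∃ i, ∃ hi : i < w.length, Y (w.get ⟨i, hi⟩) = k) := by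
  intro k
  simp only [exists_get_eq_iff_mem_map]
  constructor
  · rintro ⟨f, rfl⟩ w hw hclose
    by_contra hf
    have hle := speckerNet_le_of_converges hconv (append_singleton_mem_speckerD hw hf)
    rw [speckerNet_append_singleton] at hle
    linarith [(abs_lt.1 hclose).1]
  · intro h
    obtain ⟨w₀, hw₀, hclose⟩ := hconv ((2 : ℝ) ^ (-(k : ℤ))) (by positivity)
    obtain ⟨f, -, hf⟩ := List.mem_map.1 (h w₀ hw₀ (hclose w₀ hw₀ (speckerLE_iff_subset.2 (List.Subset.refl _))))
    exact ⟨f, hf⟩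

theorem specker_net_range_characterization (Y : (ℕ → ℕ) → ℕ) (cInf : ℝ)
    (hmono : ∀ v ∈ SpeckerD Y, ∀ w ∈ SpeckerD Y, SpeckerLE v w →
      SpeckerNet Y v ≤ SpeckerNet Y w)
    (hconv : ∀ ε > (0 : ℝ), ∃ w₀ ∈ SpeckerD Y, ∀ w ∈ SpeckerD Y,
      SpeckerLE w₀ w → |SpeckerNet Y w - cInf| < ε) :
    ∀ k : ℕ, (∃ f : ℕ → ℕ, Y f = k) ↔
      (∀ w ∈ SpeckerD Y, |SpeckerNet Y w - cInf| < (2 : ℝ) ^ (-(k : ℤ)) →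
        ∃ i, ∃ hi : i < w.length, Y (w.get ⟨i, hi⟩) = k) :=
  specker_net_range_characterization_general Y cInf hconv
end

section
/- Every formally real field admits a linear order making it an ordered field (Artin–Schreier): if K is a field in which −1 is not a sum of squares, then there exists a linear order ≤ on K compatible with addition and multiplication (a ≤ b → a + c ≤ b + c, and 0 ≤ a, 0 ≤ b → 0 ≤ a·b). -/
private lemma mul_sq_sum {K : Type*} [CommRing K] (c : K) (l : List K) :
    ((l.map (fun y => c * y)).map (fun x => x ^ 2)).sum
      = c ^ 2 * (l.map (fun x => x ^ 2)).sum := by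
  induction l with
  | nil => simp
  | cons a t ih =>
    simp only [List.map_cons, List.sum_cons, List.map_map] at *
    simp [ih, mul_pow, mul_add]

/-- Artin–Schreier: every formally real field admits an ordered-field structure. -/
theorem artin_schreier_orderable (K : Type*) [Field K]
    (hreal : ¬ ∃ l : List K, (l.map (fun x => x ^ 2)).sum = -1) :
    ∃ r : K → K → Prop,
      (∀ a, r a a) ∧
      (∀ a b, r a b → r b a → a = b) ∧
      (∀ a b c, r a b → r b c → r a c) ∧
      (∀ a b, r a b ∨ r b a) ∧
      (∀ a b c, r a b → r (a + c) (b + c)) ∧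
      (∀ a b, r 0 a → r 0 b → r 0 (a * b)) := by
  classical
  -- the collection of preorderings
  set C : Set (Set K) := {S | (∀ x : K, x ^ 2 ∈ S) ∧ (∀ a ∈ S, ∀ b ∈ S, a + b ∈ S) ∧
      (∀ a ∈ S, ∀ b ∈ S, a * b ∈ S) ∧ (-1 : K) ∉ S} with hC
  -- base: sums of squares
  set S0 : Set K := {x | ∃ l : List K, (l.map (fun x => x ^ 2)).sum = x} with hS0def
  have hS0 : S0 ∈ C := by
    refine ⟨fun x => ⟨[x], by simp⟩, ?_, ?_, ?_⟩
    · rintro a ⟨la, rfl⟩ b ⟨lb, rfl⟩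
      exact ⟨la ++ lb, by simp⟩
    · rintro a ⟨la, rfl⟩ b ⟨lb, rfl⟩
      induction la with
      | nil => exact ⟨[], by simp⟩
      | cons x t ih =>
        obtain ⟨m, hm⟩ := ih
        refine ⟨lb.map (fun y => x * y) ++ m, ?_⟩
        simp only [List.map_append, List.sum_append, hm, ← List.map_map, mul_sq_sum,
          List.map_cons, List.sum_cons]
        ring
    · rintro ⟨l, hl⟩; exact hreal ⟨l, hl⟩
  obtain ⟨M, -, hMmax⟩ := zorn_subset_nonempty C (fun c hcC hchain hcne => by
    obtain ⟨S, hS⟩ := hcne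
    refine ⟨⋃₀ c, ⟨fun x => Set.mem_sUnion.2 ⟨S, hS, (hcC hS).1 x⟩, ?_, ?_, ?_⟩,
      fun s hs => Set.subset_sUnion_of_mem hs⟩
    · rintro a ⟨Sa, hSa, ha⟩ b ⟨Sb, hSb, hb⟩
      rcases hchain.total hSa hSb with h | h
      · exact ⟨Sb, hSb, (hcC hSb).2.1 a (h ha) b hb⟩
      · exact ⟨Sa, hSa, (hcC hSa).2.1 a ha b (h hb)⟩
    · rintro a ⟨Sa, hSa, ha⟩ b ⟨Sb, hSb, hb⟩
      rcases hchain.total hSa hSb with h | h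
      · exact ⟨Sb, hSb, (hcC hSb).2.2.1 a (h ha) b hb⟩
      · exact ⟨Sa, hSa, (hcC hSa).2.2.1 a ha b (h hb)⟩
    · rintro ⟨Sa, hSa, ha⟩; exact (hcC hSa).2.2.2 ha) S0 hS0
  obtain ⟨hsq, hadd, hmul, hneg1⟩ := hMmax.1
  have h0 : (0 : K) ∈ M := by simpa using hsq 0
  have h1 : (1 : K) ∈ M := by simpa using hsq 1
  -- totality
  have htotal : ∀ a : K, a ∈ M ∨ -a ∈ M := by
    intro a
    by_cases hna : -a ∈ M
    · exact Or.inr hna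
    left
    set M' : Set K := {x | ∃ p ∈ M, ∃ q ∈ M, x = p + q * a} with hM'
    have hMM' : M ⊆ M' := fun p hp => ⟨p, hp, 0, h0, by ring⟩
    have hM'C : M' ∈ C := by
      refine ⟨fun x => ⟨x ^ 2, hsq x, 0, h0, by ring⟩, ?_, ?_, ?_⟩
      · rintro _ ⟨p, hp, q, hq, rfl⟩ _ ⟨p', hp', q', hq', rfl⟩
        exact ⟨p + p', hadd _ hp _ hp', q + q', hadd _ hq _ hq', by ring⟩
      · rintro _ ⟨p, hp, q, hq, rfl⟩ _ ⟨p', hp', q', hq', rfl⟩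
        refine ⟨p * p' + q * q' * a ^ 2,
          hadd _ (hmul _ hp _ hp') _ (hmul _ (hmul _ hq _ hq') _ (hsq a)),
          p * q' + q * p', hadd _ (hmul _ hp _ hq') _ (hmul _ hq _ hp'), by ring⟩
      · rintro ⟨p, hp, q, hq, heq⟩
        by_cases hq0 : q = 0
        · have hp' : (-1 : K) = p := by simpa [hq0] using heq
          exact hneg1 (hp' ▸ hp)
        · apply hna
          have : -a = (1 + p) * q * (q⁻¹) ^ 2 := by
            rw [sq, show (1 + p) * q * (q⁻¹ * q⁻¹) = (1 + p) * (q * q⁻¹) * q⁻¹ by ring,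
              mul_inv_cancel₀ hq0, mul_one]
            apply mul_right_cancel₀ hq0
            rw [mul_assoc, inv_mul_cancel₀ hq0, mul_one]
            linear_combination heq
          rw [this]
          exact hmul _ (hmul _ (hadd _ h1 _ hp) _ hq) _ (hsq q⁻¹)
    exact hMmax.2 hM'C hMM' ⟨0, h0, 1, h1, by ring⟩
  -- antisymmetry at 0
  have hanti : ∀ a : K, a ∈ M → -a ∈ M → a = 0 := by
    intro a ha hna
    by_contra h
    apply hneg1
    have : (-1 : K) = a * -a * (a⁻¹) ^ 2 := by field_simp
    rw [this]
    exact hmul _ (hmul _ ha _ hna) _ (hsq a⁻¹)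
  refine ⟨fun a b => b - a ∈ M, fun a => by simpa using h0, ?_, ?_, ?_, ?_, ?_⟩
  · intro a b h1 h2
    have := hanti (b - a) h1 (by simpa using h2)
    exact (sub_eq_zero.mp this).symm
  · intro a b c hab hbc
    have := hadd _ hbc _ hab
    simpa using this
  · intro a b
    rcases htotal (b - a) with h | h
    · exact Or.inl h
    · exact Or.inr (by simpa using h)
  · intro a b c h; simpa using h
  · intro a b ha hb
    simpa using hmul _ (by simpa using ha) _ (by simpa using hb)
end

section
/- For distinct primes q₁, …, q_n different from 2, √2 does not belong to the field ℚ(√q₁, …, √q_n). -/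
/-!
Adjoining a square root `x` with `x ^ 2 ∈ F` to a field `F` gives `F + F x`. If `√m = a + b √r`
with `a, b ∈ F` and `√r ∉ F`, squaring shows `a b = 0`, so `√m ∈ F` or `√(r m) = b r ∈ F`.
Induction on the primes adjoined, for all squarefree `m ≠ 1` prime to them at once, shows
`√m ∉ ℚ(√p : p ∈ s)`; take `m = 2`.
-/

namespace Subfield

variable {K : Type*} [Field K]

def adjoinSqrt (F : Subfield K) (x : K) (hx : x ^ 2 ∈ F) : Subfield K where
  carrier := {y | ∃ a ∈ F, ∃ b ∈ F, a + b * x = y}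
  zero_mem' := ⟨0, F.zero_mem, 0, F.zero_mem, by ring⟩
  one_mem' := ⟨1, F.one_mem, 0, F.zero_mem, by ring⟩
  add_mem' := by
    rintro _ _ ⟨a, ha, b, hb, rfl⟩ ⟨c, hc, d, hd, rfl⟩
    exact ⟨a + c, F.add_mem ha hc, b + d, F.add_mem hb hd, by ring⟩
  neg_mem' := by
    rintro _ ⟨a, ha, b, hb, rfl⟩
    exact ⟨-a, F.neg_mem ha, -b, F.neg_mem hb, by ring⟩
  mul_mem' := by
    rintro _ _ ⟨a, ha, b, hb, rfl⟩ ⟨c, hc, d, hd, rfl⟩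
    exact ⟨a * c + b * d * x ^ 2, F.add_mem (F.mul_mem ha hc) (F.mul_mem (F.mul_mem hb hd) hx),
      a * d + b * c, F.add_mem (F.mul_mem ha hd) (F.mul_mem hb hc), by ring⟩
  inv_mem' := by
    rintro _ ⟨a, ha, b, hb, rfl⟩
    by_cases hconj : a - b * x = 0
    · -- then `a + b x = 2 a ∈ F`
      refine ⟨(a + a)⁻¹, F.inv_mem (F.add_mem ha ha), 0, F.zero_mem, ?_⟩
      rw [show a + b * x = a + a by linear_combination -hconj]
      ring
    · -- `(a + b x)⁻¹ = (a - b x) c` with `c = (a ^ 2 - b ^ 2 x ^ 2)⁻¹ ∈ F`, also when `a + b x = 0`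
      -- since then both sides are `0`
      have hnorm : a ^ 2 - b ^ 2 * x ^ 2 ∈ F :=
        F.sub_mem (F.pow_mem ha 2) (F.mul_mem (F.pow_mem hb 2) hx)
      refine ⟨a * (a ^ 2 - b ^ 2 * x ^ 2)⁻¹, F.mul_mem ha (F.inv_mem hnorm),
        -b * (a ^ 2 - b ^ 2 * x ^ 2)⁻¹, F.mul_mem (F.neg_mem hb) (F.inv_mem hnorm), ?_⟩
      rw [show a ^ 2 - b ^ 2 * x ^ 2 = (a + b * x) * (a - b * x) by ring, mul_inv,
        mul_comm (a + b * x)⁻¹]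
      field_simp
      ring

theorem exists_add_mul_eq_of_mem_closure_insert {F : Subfield K} {x y : K} (hx : x ^ 2 ∈ F)
    (hy : y ∈ closure (insert x F)) : ∃ a ∈ F, ∃ b ∈ F, a + b * x = y := by
  have hle : closure (insert x F) ≤ F.adjoinSqrt x hx := by
    rw [closure_le, Set.insert_subset_iff]
    exact ⟨⟨0, F.zero_mem, 1, F.one_mem, by ring⟩,
      fun a ha => ⟨a, ha, 0, F.zero_mem, by ring⟩⟩
  exact hle hy

theorem mem_or_mul_mem_of_mem_closure_insert [NeZero (2 : K)] {F : Subfield K} {x y : K}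
    (hx : x ^ 2 ∈ F) (hxF : x ∉ F) (hy : y ^ 2 ∈ F) (hyx : y ∈ closure (insert x F)) :
    y ∈ F ∨ x * y ∈ F := by
  obtain ⟨a, ha, b, hb, rfl⟩ := exists_add_mul_eq_of_mem_closure_insert hx hyx
  have hab : a * b = 0 := by
    by_contra hab
    apply hxF
    have h2ab : 2 * (a * b) ≠ 0 := mul_ne_zero two_ne_zero hab
    rw [show x = ((a + b * x) ^ 2 - a ^ 2 - b ^ 2 * x ^ 2) / (2 * (a * b)) by
      rw [eq_div_iff h2ab]; ring]
    exact F.div_mem (F.sub_mem (F.sub_mem hy (F.pow_mem ha 2)) (F.mul_mem (F.pow_mem hb 2) hx))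
      (F.mul_mem (ofNat_mem F 2) (F.mul_mem ha hb))
  rcases mul_eq_zero.mp hab with rfl | rfl
  · right
    rw [show x * (0 + b * x) = b * x ^ 2 by ring]
    exact F.mul_mem hb hx
  · left
    simpa using ha

end Subfield

theorem Squarefree.isUnit_of_isSquare {R : Type*} [Monoid R] {m : R} (hm : Squarefree m)
    (hsq : IsSquare m) : IsUnit m := by
  obtain ⟨k, rfl⟩ := hsq
  exact (hm k dvd_rfl).mul (hm k dvd_rfl)

theorem Irrational.notMem_bot {x : ℝ} (hx : Irrational x) : x ∉ (⊥ : Subfield ℝ) := by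
  intro hmem
  obtain ⟨q, hq⟩ := (bot_le : ⊥ ≤ (Rat.castHom ℝ).fieldRange) hmem
  exact hx ⟨q, hq⟩

theorem Real.sqrt_natCast_notMem_closure_sqrt_primes {s : Set ℕ} (hs : s.Finite)
    (hprime : ∀ p ∈ s, p.Prime) {m : ℕ} (hm : Squarefree m) (hm1 : m ≠ 1)
    (hdvd : ∀ p ∈ s, ¬ p ∣ m) :
    √(m : ℝ) ∉ Subfield.closure ((fun p : ℕ => √(p : ℝ)) '' s) := by
  induction s, hs using Set.Finite.induction_on generalizing m with
  | empty =>
    rw [Set.image_empty, Subfield.closure_empty]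
    refine Irrational.notMem_bot (irrational_sqrt_natCast_iff.mpr fun hsq => hm1 ?_)
    exact Nat.isUnit_iff.mp (hm.isUnit_of_isSquare hsq)
  | @insert r s hrs _ ih =>
    intro hmem
    have hr : r.Prime := hprime r (Set.mem_insert r s)
    have hprime' : ∀ p ∈ s, p.Prime := fun p hp => hprime p (Set.mem_insert_of_mem r hp)
    have hdvd_r : ∀ p ∈ s, ¬ p ∣ r := fun p hp hpr =>
      hrs ((Nat.prime_dvd_prime_iff_eq (hprime' p hp) hr).mp hpr ▸ hp)
    set F := Subfield.closure ((fun p : ℕ => √(p : ℝ)) '' s)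
    have hsqrt_sq (k : ℕ) : √(k : ℝ) ^ 2 ∈ F := by
      rw [Real.sq_sqrt k.cast_nonneg]
      exact natCast_mem F k
    have hmem' : √(m : ℝ) ∈ Subfield.closure (insert √(r : ℝ) F) := by
      refine Subfield.closure_mono ?_ hmem
      rw [Set.image_insert_eq]
      exact Set.insert_subset_insert Subfield.subset_closure
    rcases Subfield.mem_or_mul_mem_of_mem_closure_insert (hsqrt_sq r)
      (ih hprime' hr.squarefree hr.one_lt.ne' hdvd_r) (hsqrt_sq m) hmem' with hmF | hrmF
    · exact ih hprime' hm hm1 (fun p hp => hdvd p (Set.mem_insert_of_mem r hp)) hmF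
    · have hcop : r.Coprime m := hr.coprime_iff_not_dvd.mpr (hdvd r (Set.mem_insert r s))
      refine ih hprime' ((Nat.squarefree_mul hcop).mpr ⟨hr.squarefree, hm⟩) ?_ ?_ ?_
      · exact fun h => hr.one_lt.ne' (Nat.eq_one_of_mul_eq_one_right h)
      · intro p hp hpdvd
        rcases (hprime' p hp).dvd_mul.mp hpdvd with h | h
        · exact hdvd_r p hp h
        · exact hdvd p (Set.mem_insert_of_mem r hp) h
      · rwa [Nat.cast_mul, Real.sqrt_mul r.cast_nonneg]

theorem sqrt_two_not_mem_multiquadratic_general (n : ℕ) (q : Fin n → ℕ)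
    (hq : ∀ i, Nat.Prime (q i)) (hodd : ∀ i, q i ≠ 2) :
    Real.sqrt 2 ∉ Subfield.closure (Set.range fun i => Real.sqrt (q i)) := by
  have hrange : (Set.range fun i => √(q i : ℝ)) = (fun p : ℕ => √(p : ℝ)) '' Set.range q :=
    Set.range_comp (fun p : ℕ => √(p : ℝ)) q
  rw [hrange, show (2 : ℝ) = (2 : ℕ) by norm_num]
  refine Real.sqrt_natCast_notMem_closure_sqrt_primes (Set.finite_range q) ?_
    Nat.prime_two.squarefree (by norm_num) ?_
  · rintro _ ⟨i, rfl⟩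
    exact hq i
  · rintro _ ⟨i, rfl⟩ hdvd
    exact hodd i ((Nat.prime_dvd_prime_iff_eq (hq i) Nat.prime_two).mp hdvd)

/-- For distinct odd primes `q₁, …, q_n`, `√2 ∉ ℚ(√q₁, …, √q_n)`. -/
theorem sqrt_two_not_mem_multiquadratic (n : ℕ) (q : Fin n → ℕ)
    (hq : ∀ i, Nat.Prime (q i)) (hodd : ∀ i, q i ≠ 2)
    (hinj : Function.Injective q) :
    Real.sqrt 2 ∉ Subfield.closure (Set.range fun i => Real.sqrt (q i)) :=
  sqrt_two_not_mem_multiquadratic_general n q hq hodd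
end

section
/- For pairwise distinct primes p₁, …, p_n, the field extension ℚ(√p₁, …, √p_n)/ℚ has degree 2^n; equivalently, the 2^n products of subsets of {√p₁,…,√p_n} are linearly independent over ℚ. -/
/-!
Induct on the set `S` of primes, proving along the way that `√m ∉ ℚ(√p : p ∈ S)` for every
squarefree `m ≠ 1` prime to all `p ∈ S`. Write `L = ℚ(√p : p ∈ S)` and let `q ∉ S` be prime.
Since `L(√q) = L + L √q`, squaring `√m = c + d √q` shows that one of `√m`, `√q`, `√(mq)`
already lies in `L`, which the induction hypothesis for `m`, `q` and `mq` rules out. Hence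
`√m ∉ L(√q)`, and each adjoined `√q` doubles the degree.
-/

open Polynomial IntermediateField

namespace IntermediateField

variable {F E : Type*} [Field F] [Field E] [Algebra F E]

theorem exists_eq_add_mul_of_mem_adjoin_simple_of_sq_eq {α : E} {a : F}
    (hα : α ^ 2 = algebraMap F E a) {x : E} (hx : x ∈ F⟮α⟯) :
    ∃ c d : F, x = algebraMap F E c + algebraMap F E d * α := by
  have hmonic : (X ^ 2 - C a).Monic := monic_X_pow_sub_C a two_ne_zero
  have hroot : aeval α (X ^ 2 - C a) = 0 := by simp [hα]
  rw [← mem_toSubalgebra, adjoin_simple_toSubalgebra_of_isAlgebraic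
    (IsIntegral.isAlgebraic ⟨_, hmonic, hroot⟩), Algebra.adjoin_singleton_eq_range_aeval] at hx
  obtain ⟨q, rfl⟩ := hx
  have hdeg : (q %ₘ (X ^ 2 - C a)).degree ≤ 1 := by
    have := degree_modByMonic_lt q hmonic
    rw [degree_X_pow_sub_C two_pos] at this
    exact Order.le_of_lt_succ this
  obtain ⟨d, c, hr⟩ := exists_eq_X_add_C_of_natDegree_le_one (natDegree_le_of_degree_le hdeg)
  refine ⟨c, d, ?_⟩
  rw [AlgHom.toRingHom_eq_coe, RingHom.coe_coe, ← aeval_modByMonic_eq_self_of_root hroot, hr]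
  simp only [map_add, map_mul, aeval_C, aeval_X]
  ring

theorem adjoin_insert_eq_restrictScalars (S : Set E) (x : E) :
    adjoin F (insert x S) = (adjoin (adjoin F S) {x}).restrictScalars F := by
  rw [adjoin_adjoin_left, Set.union_singleton]

variable (L : IntermediateField F E) {α β : E}

theorem finrank_adjoin_simple_of_sq_mem (hα : α ^ 2 ∈ L) (hαL : α ∉ L) :
    Module.finrank L (adjoin L {α}) = 2 := by
  set a : L := ⟨α ^ 2, hα⟩
  have hroot : aeval α (X ^ 2 - C a) = 0 := by simp [a]
  have hirr : Irreducible (X ^ 2 - C a) := by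
    refine X_pow_sub_C_irreducible_of_prime Nat.prime_two fun b hb => hαL ?_
    have hsq : α ^ 2 = (b : E) ^ 2 := by rw [← L.coe_pow, hb]
    rcases sq_eq_sq_iff_eq_or_eq_neg.mp hsq with h | h <;> rw [h]
    · exact b.2
    · exact neg_mem b.2
  have hmonic : (X ^ 2 - C a).Monic := monic_X_pow_sub_C a two_ne_zero
  rw [adjoin.finrank ⟨_, hmonic, hroot⟩, ← minpoly.eq_of_irreducible_of_monic hirr hroot hmonic,
    natDegree_X_pow_sub_C]

theorem notMem_adjoin_simple_of_sq_mem [NeZero (2 : E)] (hα : α ^ 2 ∈ L) (hβ : β ^ 2 ∈ L)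
    (hαL : α ∉ L) (hβL : β ∉ L) (hαβ : α * β ∉ L) : α ∉ adjoin L {β} := by
  intro hmem
  obtain ⟨c, d, hcd⟩ :=
    exists_eq_add_mul_of_mem_adjoin_simple_of_sq_eq (a := (⟨β ^ 2, hβ⟩ : L)) rfl hmem
  simp only [algebraMap_apply] at hcd
  by_cases hd : (d : E) = 0
  · exact hαL (by rw [hcd, hd, zero_mul, add_zero]; exact c.2)
  by_cases hc : (c : E) = 0
  · refine hαβ ?_
    rw [show α * β = d * β ^ 2 by rw [hcd, hc]; ring]
    exact mul_mem d.2 hβ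
  -- squaring `α = c + d β` isolates the cross term `2 c d β`
  refine hβL ?_
  rw [show β = (α ^ 2 - c ^ 2 - d ^ 2 * β ^ 2) / (2 * c * d) by
    rw [eq_div_iff (mul_ne_zero (mul_ne_zero two_ne_zero hc) hd), hcd]; ring]
  exact div_mem (sub_mem (sub_mem hα (pow_mem c.2 2)) (mul_mem (pow_mem d.2 2) hβ))
    (mul_mem (mul_mem (ofNat_mem L 2) c.2) d.2)

end IntermediateField

theorem sqrt_natCast_sq_mem (L : IntermediateField ℚ ℝ) (k : ℕ) : √(k : ℝ) ^ 2 ∈ L := by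
  rw [Real.sq_sqrt k.cast_nonneg]
  exact IntermediateField.natCast_mem L k

theorem not_dvd_prime_of_notMem {s : Finset ℕ} (hs : ∀ r ∈ s, r.Prime) {q : ℕ} (hq : q.Prime)
    (hqs : q ∉ s) : ∀ r ∈ s, ¬ r ∣ q := fun r hr h =>
  hqs ((Nat.prime_dvd_prime_iff_eq (hs r hr) hq).mp h ▸ hr)

theorem sqrt_natCast_notMem_adjoin_sqrt_primes (s : Finset ℕ) (hs : ∀ q ∈ s, q.Prime) {m : ℕ}
    (hm : Squarefree m) (hm1 : m ≠ 1) (hdvd : ∀ q ∈ s, ¬ q ∣ m) :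
    √(m : ℝ) ∉ adjoin ℚ ((fun q : ℕ => √(q : ℝ)) '' s) := by
  induction s using Finset.induction_on generalizing m with
  | empty =>
    rw [Finset.coe_empty, Set.image_empty, adjoin_empty, mem_bot]
    rintro ⟨r, hr⟩
    refine irrational_sqrt_natCast_iff.mpr ?_ ⟨r, hr⟩
    rintro ⟨k, rfl⟩
    exact hm1 (by rw [Nat.isUnit_iff.mp (hm k dvd_rfl)])
  | insert q s hqs ih =>
    have hq : q.Prime := hs q (Finset.mem_insert_self q s)
    have hs' : ∀ r ∈ s, r.Prime := fun r hr => hs r (Finset.mem_insert_of_mem hr)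
    have hqm : ¬ q ∣ m := hdvd q (Finset.mem_insert_self q s)
    have hdvd' : ∀ r ∈ s, ¬ r ∣ m := fun r hr => hdvd r (Finset.mem_insert_of_mem hr)
    have hdvdq := not_dvd_prime_of_notMem hs' hq hqs
    rw [Finset.coe_insert, Set.image_insert_eq, adjoin_insert_eq_restrictScalars,
      mem_restrictScalars]
    refine notMem_adjoin_simple_of_sq_mem _ (sqrt_natCast_sq_mem _ m) (sqrt_natCast_sq_mem _ q)
      (ih hs' hm hm1 hdvd') (ih hs' hq.squarefree hq.one_lt.ne' hdvdq) ?_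
    have hmq : Squarefree (m * q) :=
      (Nat.squarefree_mul (hq.coprime_iff_not_dvd.mpr hqm).symm).mpr ⟨hm, hq.squarefree⟩
    rw [← Real.sqrt_mul m.cast_nonneg, ← Nat.cast_mul]
    refine ih hs' hmq (fun h => hq.one_lt.ne' (Nat.eq_one_of_mul_eq_one_left h)) fun r hr h => ?_
    rcases (hs' r hr).dvd_mul.mp h with h | h
    exacts [hdvd' r hr h, hdvdq r hr h]

theorem finrank_adjoin_sqrt_primes (s : Finset ℕ) (hs : ∀ q ∈ s, q.Prime) :
    Module.finrank ℚ (adjoin ℚ ((fun q : ℕ => √(q : ℝ)) '' s)) = 2 ^ s.card := by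
  induction s using Finset.induction_on with
  | empty => simp
  | insert q s hqs ih =>
    have hq : q.Prime := hs q (Finset.mem_insert_self q s)
    have hs' : ∀ r ∈ s, r.Prime := fun r hr => hs r (Finset.mem_insert_of_mem hr)
    set L := adjoin ℚ ((fun q : ℕ => √(q : ℝ)) '' s)
    have hqL : √(q : ℝ) ∉ L := sqrt_natCast_notMem_adjoin_sqrt_primes s hs' hq.squarefree
      hq.one_lt.ne' (not_dvd_prime_of_notMem hs' hq hqs)
    rw [Finset.coe_insert, Set.image_insert_eq, adjoin_insert_eq_restrictScalars,
      Finset.card_insert_of_notMem hqs, pow_succ, ← ih hs',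
      ← finrank_adjoin_simple_of_sq_mem L (sqrt_natCast_sq_mem L q) hqL]
    exact (Module.finrank_mul_finrank ℚ L (adjoin L {√(q : ℝ)})).symm

/-- For pairwise distinct primes `p₁, …, p_n`, the extension `ℚ(√p₁, …, √p_n)/ℚ`
has degree `2 ^ n`. -/
theorem multiquadratic_degree (n : ℕ) (p : Fin n → ℕ)
    (hp : ∀ i, Nat.Prime (p i)) (hinj : Function.Injective p) :
    Module.finrank ℚ
      (IntermediateField.adjoin ℚ (Set.range fun i => Real.sqrt (p i))) = 2 ^ n := by
  have hrange : (Set.range fun i => √(p i : ℝ)) =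
      (fun q : ℕ => √(q : ℝ)) '' ↑(Finset.univ.image p) := by
    rw [Finset.coe_image, Finset.coe_univ, Set.image_univ, ← Set.range_comp]
    rfl
  rw [hrange, finrank_adjoin_sqrt_primes _ (by simpa using hp),
    Finset.card_image_of_injective _ hinj, Finset.card_fin]
end

section
/- Let Y : (ℕ → ℕ) → ℕ and define G on nonempty finite lists w of elements of Baire space by the Rado construction: A_w = {0,1}, F_w(h) = 1 if some entry g of w has Y(g) = h(0), else 0. If F is any choice function as in the Rado selection lemma for this family (i.e., for every finite set J of indices there is a finite K ⊇ J on whose members F agrees with F_K), then for every n: (∃ g, Y(g) = n) ↔ F(ñ) = 1, where ñ is the constant sequence with value n. -/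
open Classical in
/-- The Rado-construction choice function: `radoF Y w h = 1` iff some entry `g` of `w`
has `Y g = h 0`. -/
noncomputable def radoF (Y : (ℕ → ℕ) → ℕ) (w : List (ℕ → ℕ)) (h : ℕ → ℕ) : ℕ :=
  if ∃ g ∈ w, Y g = h 0 then 1 else 0

/-- If `F` satisfies the Rado coherence property for the family associated to `Y`,
then `F` on the constant sequence `ñ` decides membership of `n` in the range of `Y`. -/
theorem rado_range_characterization (Y : (ℕ → ℕ) → ℕ) (F : (ℕ → ℕ) → ℕ)
    (hF : ∀ J : List (ℕ → ℕ), ∃ K : List (ℕ → ℕ),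
      (∀ j ∈ J, j ∈ K) ∧ ∀ j ∈ J, F j = radoF Y K j) :
    ∀ n : ℕ, (∃ g : ℕ → ℕ, Y g = n) ↔ F (fun _ => n) = 1 := by
  intro n
  constructor
  · rintro ⟨g, hg⟩
    obtain ⟨K, hK1, hK2⟩ := hF [g, fun _ => n]
    have := hK2 (fun _ => n) (by simp)
    rw [this, radoF, if_pos ⟨g, hK1 g (by simp), hg⟩]
  · intro h
    obtain ⟨K, hK1, hK2⟩ := hF [fun _ => n]
    have := hK2 (fun _ => n) (by simp)
    rw [this, radoF] at h
    split at h
    · rename_i hx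
      obtain ⟨g, _, hg⟩ := hx
      exact ⟨g, hg⟩
    · simp at h
end
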